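/- arXiv:2205.06225 — 5 statements merged into one kernel-verified Lean document; each statement's English description precedes it below -/
import Mathlib

section
/- Let N ∈ ℂ^{n×n} be Hermitian positive definite and A ∈ ℂ^{n×p}, B ∈ ℂ^{p×l}. With E(Γ) = (I - Γᴴ A B)(I - Γᴴ A B)ᴴ + Γᴴ N Γ, the choice Γ̂ = (N + A B Bᴴ Aᴴ)⁻¹ A B minimizes E(Γ) in the Loewner order: E(Γ̂) ⪯ E(Γ) for all Γ ∈ ℂ^{n×l}. -/
/-!
Expanding the error covariance gives `E Γ = 1 + Q Γ` with the quadratic form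
`Q Γ = Γᴴ M Γ - Γᴴ C - Cᴴ Γ`, where `C = A B` and `M = N + C Cᴴ` is positive definite.
Since `M Γ̂ = C`, completing the square yields `E Γ - E Γ̂ = (Γ - Γ̂)ᴴ M (Γ - Γ̂) ⪰ 0`.
-/

open Matrix
open scoped ComplexOrder

namespace Matrix

variable {R : Type*} [Ring R] [StarRing R] {m n : Type*} [Fintype m]

theorem one_sub_mul_conjTranspose_add [Fintype n] [DecidableEq n]
    (N : Matrix m m R) (C X : Matrix m n R) :
    (1 - Xᴴ * C) * (1 - Xᴴ * C)ᴴ + Xᴴ * N * X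
      = 1 + (Xᴴ * (N + C * Cᴴ) * X - Xᴴ * C - Cᴴ * X) := by
  simp only [conjTranspose_sub, conjTranspose_one, conjTranspose_mul,
    conjTranspose_conjTranspose, Matrix.sub_mul, Matrix.mul_sub, Matrix.one_mul,
    Matrix.mul_one, Matrix.mul_add, Matrix.add_mul, Matrix.mul_assoc]
  abel

theorem quadratic_sub_quadratic_of_mul_eq {M : Matrix m m R} (hM : M.IsHermitian)
    {C X Y : Matrix m n R} (hY : M * Y = C) :
    (Xᴴ * M * X - Xᴴ * C - Cᴴ * X) - (Yᴴ * M * Y - Yᴴ * C - Cᴴ * Y)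
      = (X - Y)ᴴ * M * (X - Y) := by
  subst hY
  simp only [conjTranspose_mul, hM.eq, conjTranspose_sub, Matrix.sub_mul, Matrix.mul_sub,
    Matrix.mul_assoc]
  abel

end Matrix

theorem mmse_receiver_loewner_optimal (n p l : ℕ)
    (N : Matrix (Fin n) (Fin n) ℂ) (A : Matrix (Fin n) (Fin p) ℂ)
    (B : Matrix (Fin p) (Fin l) ℂ) (hN : N.PosDef)
    (E : Matrix (Fin n) (Fin l) ℂ → Matrix (Fin l) (Fin l) ℂ)
    (hE : ∀ Γ, E Γ = ((1 : Matrix (Fin l) (Fin l) ℂ) - Γᴴ * A * B) *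
        ((1 : Matrix (Fin l) (Fin l) ℂ) - Γᴴ * A * B)ᴴ + Γᴴ * N * Γ)
    (Γhat : Matrix (Fin n) (Fin l) ℂ)
    (hΓhat : Γhat = (N + A * B * Bᴴ * Aᴴ)⁻¹ * A * B) :
    ∀ Γ : Matrix (Fin n) (Fin l) ℂ, (E Γ - E Γhat).PosSemidef := by
  intro Γ
  set C := A * B
  set M := N + C * Cᴴ
  have hM : M.PosDef := hN.add_posSemidef (posSemidef_self_mul_conjTranspose C)
  have hMΓhat : M * Γhat = C := by
    have hMC : N + A * B * Bᴴ * Aᴴ = M := by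
      simp only [M, C, conjTranspose_mul, Matrix.mul_assoc]
    rw [hΓhat, hMC, Matrix.mul_assoc, mul_nonsing_inv_cancel_left _ _
      ((isUnit_iff_isUnit_det M).mp hM.isUnit)]
  have hE_quadratic : ∀ X, E X = 1 + (Xᴴ * M * X - Xᴴ * C - Cᴴ * X) := fun X => by
    rw [hE, Matrix.mul_assoc Xᴴ A B, one_sub_mul_conjTranspose_add]
  rw [hE_quadratic, hE_quadratic, add_sub_add_left_eq_sub,
    quadratic_sub_quadratic_of_mul_eq hM.isHermitian hMΓhat]
  exact hM.posSemidef.conjTranspose_mul_mul_same _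
end

section
/- Let N ∈ ℂ^{n×n} be Hermitian positive definite, A ∈ ℂ^{n×p}, B ∈ ℂ^{p×l}, and Γ̂ = (N + A B Bᴴ Aᴴ)⁻¹ A B. Then E(Γ̂) = I - Γ̂ᴴ A B, where E(Γ) = (I - Γᴴ A B)(I - Γᴴ A B)ᴴ + Γᴴ N Γ. -/
/-!
With `G = A B` and `M = N + G Gᴴ`, the receiver `Γ̂ = M⁻¹ G` solves the normal equation `M Γ̂ = G`.
Substituting `N = M - G Gᴴ` turns `Γ̂ᴴ N Γ̂` into `X - X Xᴴ` for `X = Γ̂ᴴ G`, and the error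
collapses to `1 - Xᴴ`; finally `X = Γ̂ᴴ M Γ̂` is Hermitian because `M` is.
-/

open Matrix
open scoped ComplexOrder

namespace Matrix

variable {α : Type*} [Ring α] [StarRing α] {m k : Type*} [Fintype m]

theorem isHermitian_conjTranspose_mul_of_mul_eq {M : Matrix m m α} {Γ G : Matrix m k α}
    (hM : M.IsHermitian) (hΓ : M * Γ = G) : (Γᴴ * G).IsHermitian := by
  rw [IsHermitian, ← hΓ, conjTranspose_mul, conjTranspose_mul, conjTranspose_conjTranspose, hM.eq,
    Matrix.mul_assoc]

theorem mse_eq_one_sub_of_normal_eq [Fintype k] [DecidableEq k]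
    {N : Matrix m m α} {Γ G : Matrix m k α}
    (hΓ : (N + G * Gᴴ) * Γ = G) :
    (1 - Γᴴ * G) * (1 - Γᴴ * G)ᴴ + Γᴴ * N * Γ = 1 - (Γᴴ * G)ᴴ := by
  have hnoise : Γᴴ * N * Γ = Γᴴ * G - Γᴴ * G * (Γᴴ * G)ᴴ :=
    calc Γᴴ * N * Γ = Γᴴ * ((N + G * Gᴴ) * Γ) - Γᴴ * G * (Gᴴ * Γ) := by
          simp only [Matrix.mul_add, Matrix.add_mul, Matrix.mul_assoc]
          abel
      _ = Γᴴ * G - Γᴴ * G * (Γᴴ * G)ᴴ := by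
          rw [hΓ, conjTranspose_mul, conjTranspose_conjTranspose]
  rw [hnoise, conjTranspose_sub, conjTranspose_one]
  noncomm_ring

end Matrix

theorem mse_at_mmse_receiver (n p l : ℕ)
    (N : Matrix (Fin n) (Fin n) ℂ) (A : Matrix (Fin n) (Fin p) ℂ)
    (B : Matrix (Fin p) (Fin l) ℂ) (hN : N.PosDef)
    (Γhat : Matrix (Fin n) (Fin l) ℂ)
    (hΓhat : Γhat = (N + A * B * Bᴴ * Aᴴ)⁻¹ * A * B) :
    ((1 : Matrix (Fin l) (Fin l) ℂ) - Γhatᴴ * A * B) *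
        ((1 : Matrix (Fin l) (Fin l) ℂ) - Γhatᴴ * A * B)ᴴ + Γhatᴴ * N * Γhat =
      (1 : Matrix (Fin l) (Fin l) ℂ) - Γhatᴴ * A * B := by
  have hGram : A * B * Bᴴ * Aᴴ = (A * B) * (A * B)ᴴ := by
    rw [conjTranspose_mul, ← Matrix.mul_assoc]
  rw [hGram] at hΓhat
  set G := A * B
  have hM : (N + G * Gᴴ).PosDef := hN.add_posSemidef (posSemidef_self_mul_conjTranspose G)
  have hnormal : (N + G * Gᴴ) * Γhat = G := by
    rw [hΓhat, Matrix.mul_assoc _ A B, ← Matrix.mul_assoc,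
      mul_nonsing_inv _ ((isUnit_iff_isUnit_det _).1 hM.isUnit), Matrix.one_mul]
  rw [Matrix.mul_assoc Γhatᴴ A B, mse_eq_one_sub_of_normal_eq hnormal,
    (isHermitian_conjTranspose_mul_of_mul_eq hM.isHermitian hnormal).eq]
end

section
/- (Principle behind WMMSE) Let N ∈ ℂ^{n×n} be Hermitian positive definite, A ∈ ℂ^{n×p}, B ∈ ℂ^{p×l}, and E(Γ) = (I - Γᴴ A B)(I - Γᴴ A B)ᴴ + Γᴴ N Γ. Then for every Γ ∈ ℂ^{n×l} and every Hermitian positive definite Ω ∈ ℂ^{l×l}, log det(I + A B Bᴴ Aᴴ N⁻¹) ≥ log det(Ω) − Tr(Ω E(Γ)) + l, with equality attained at Γ = Γ̂ = (N + A B Bᴴ Aᴴ)⁻¹ A B and Ω = E(Γ̂)⁻¹. -/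
/-!
Write `C = A B` and `M = N + C Cᴴ`. Expanding `E` and completing the square around
`Γ̂ = M⁻¹ C` (so that `M Γ̂ = C`) gives `E Γ = E Γ̂ + (Γ - Γ̂)ᴴ M (Γ - Γ̂)` and
`E Γ̂ = 1 - Cᴴ M⁻¹ C`, and the push-through identity `M⁻¹ (N + C Cᴴ) N⁻¹ = N⁻¹` shows
`E Γ̂ (1 + Cᴴ N⁻¹ C) = 1`.
By Sylvester's determinant identity the left-hand side is therefore `-log det E Γ̂`.

For positive definite `Ω` and `S`, the matrix `√Ω S √Ω` is positive definite with determinant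
`det Ω det S` and trace `tr (Ω S)`, so `log x ≤ x - 1` applied to its eigenvalues gives
`log det Ω - tr (Ω S) + l ≤ -log det S`, with equality at `Ω = S⁻¹`. Taking `S = E Γ̂` and using
`tr (Ω (Γ - Γ̂)ᴴ M (Γ - Γ̂)) ≥ 0` proves the inequality for every `Γ`.
-/

open Matrix
open scoped ComplexOrder

namespace Matrix

section LogDet

variable {m 𝕜 : Type*} [Fintype m] [DecidableEq m] [RCLike 𝕜]

open scoped MatrixOrder

lemma PosDef.isUnit_det {A : Matrix m m 𝕜} (hA : A.PosDef) : IsUnit A.det :=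
  hA.det_pos.ne'.isUnit

lemma PosDef.re_det_pos {A : Matrix m m 𝕜} (hA : A.PosDef) : 0 < RCLike.re A.det :=
  (RCLike.pos_iff.mp hA.det_pos).1

lemma PosDef.re_det_mul {A B : Matrix m m 𝕜} (hA : A.PosDef) (hB : B.PosDef) :
    RCLike.re (A * B).det = RCLike.re A.det * RCLike.re B.det := by
  obtain ⟨a, -, ha⟩ := RCLike.pos_iff_exists_ofReal.mp hA.det_pos
  obtain ⟨b, -, hb⟩ := RCLike.pos_iff_exists_ofReal.mp hB.det_pos
  rw [det_mul, ← ha, ← hb, ← RCLike.ofReal_mul]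
  simp only [RCLike.ofReal_re]

lemma PosDef.log_re_det_eq_neg_of_mul_eq_one {A B : Matrix m m 𝕜} (hA : A.PosDef)
    (h : A * B = 1) : Real.log (RCLike.re B.det) = -Real.log (RCLike.re A.det) := by
  obtain ⟨a, -, ha⟩ := RCLike.pos_iff_exists_ofReal.mp hA.det_pos
  have hdet : A.det * B.det = 1 := by rw [← det_mul, h, det_one]
  have hB : B.det = (a⁻¹ : ℝ) := by rw [RCLike.ofReal_inv, ha, eq_inv_of_mul_eq_one_right hdet]
  rw [hB, ← ha, RCLike.ofReal_re, RCLike.ofReal_re, Real.log_inv]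

lemma PosDef.log_re_det_le_re_trace_sub_card {A : Matrix m m 𝕜} (hA : A.PosDef) :
    Real.log (RCLike.re A.det) ≤ RCLike.re A.trace - Fintype.card m := by
  have hpos := hA.eigenvalues_pos
  rw [hA.isHermitian.det_eq_prod_eigenvalues, hA.isHermitian.trace_eq_sum_eigenvalues,
    ← RCLike.ofReal_prod, ← RCLike.ofReal_sum, RCLike.ofReal_re, RCLike.ofReal_re,
    Real.log_prod fun i _ => (hpos i).ne']
  calc ∑ i, Real.log (hA.isHermitian.eigenvalues i)
      ≤ ∑ i, (hA.isHermitian.eigenvalues i - 1) :=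
        Finset.sum_le_sum fun i _ => Real.log_le_sub_one_of_pos (hpos i)
    _ = _ := by simp [Finset.sum_sub_distrib]

lemma PosDef.sqrt_mul_mul_sqrt {Ω S : Matrix m m 𝕜} (hΩ : Ω.PosDef) (hS : S.PosDef) :
    (CFC.sqrt Ω * S * CFC.sqrt Ω).PosDef := by
  have hU : IsUnit (CFC.sqrt Ω) :=
    CFC.isUnit_sqrt_iff_isStrictlyPositive.mpr hΩ.isStrictlyPositive
  have := hU.posDef_star_left_conjugate_iff.mpr hS
  rwa [(CFC.sqrt_nonneg Ω).isSelfAdjoint.star_eq] at this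

lemma trace_sqrt_mul_mul_sqrt {Ω : Matrix m m 𝕜} (hΩ : 0 ≤ Ω) (S : Matrix m m 𝕜) :
    (CFC.sqrt Ω * S * CFC.sqrt Ω).trace = (Ω * S).trace := by
  rw [trace_mul_cycle, CFC.sqrt_mul_sqrt_self Ω hΩ]

lemma PosSemidef.re_trace_mul_nonneg {Ω P : Matrix m m 𝕜} (hΩ : Ω.PosSemidef)
    (hP : P.PosSemidef) : 0 ≤ RCLike.re (Ω * P).trace := by
  have hT := hP.conjTranspose_mul_mul_same (CFC.sqrt Ω)
  rw [(CFC.sqrt_nonneg Ω).posSemidef.isHermitian.eq] at hT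
  rw [← trace_sqrt_mul_mul_sqrt hΩ.nonneg]
  exact (RCLike.nonneg_iff.mp hT.trace_nonneg).1

lemma PosDef.log_re_det_sub_re_trace_mul_add_card_le {Ω S : Matrix m m 𝕜} (hΩ : Ω.PosDef)
    (hS : S.PosDef) :
    Real.log (RCLike.re Ω.det) - RCLike.re (Ω * S).trace + Fintype.card m ≤
      -Real.log (RCLike.re S.det) := by
  have hT := (hΩ.sqrt_mul_mul_sqrt hS).log_re_det_le_re_trace_sub_card
  have hdet : (CFC.sqrt Ω * S * CFC.sqrt Ω).det = (Ω * S).det := by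
    rw [det_mul, det_mul, det_mul, mul_right_comm, ← det_mul,
      CFC.sqrt_mul_sqrt_self Ω hΩ.posSemidef.nonneg]
  rw [hdet, trace_sqrt_mul_mul_sqrt hΩ.posSemidef.nonneg, hΩ.re_det_mul hS,
    Real.log_mul hΩ.re_det_pos.ne' hS.re_det_pos.ne'] at hT
  linarith

end LogDet

section Woodbury

variable {m k α : Type*} [Fintype m] [Fintype k] [DecidableEq m] [DecidableEq k] [CommRing α]

lemma one_sub_mul_inv_mul_mul_one_add_mul_inv_mul {N : Matrix m m α}
    (C : Matrix m k α) (D : Matrix k m α) (hN : IsUnit N.det) (hM : IsUnit (N + C * D).det) :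
    (1 - D * (N + C * D)⁻¹ * C) * (1 + D * N⁻¹ * C) = 1 := by
  have h : D * (N + C * D)⁻¹ * C + D * (N + C * D)⁻¹ * C * (D * N⁻¹ * C) = D * N⁻¹ * C := by
    calc _ = D * ((N + C * D)⁻¹ * (N + C * D)) * N⁻¹ * C := by
          simp only [Matrix.mul_add, Matrix.add_mul, Matrix.mul_assoc,
            mul_nonsing_inv_cancel_left _ _ hN]
      _ = D * N⁻¹ * C := by rw [nonsing_inv_mul _ hM, Matrix.mul_one]
  rw [Matrix.sub_mul, Matrix.one_mul, Matrix.mul_add, Matrix.mul_one, h, add_sub_cancel_right]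

end Woodbury

section MSE

variable {m k α : Type*} [Fintype m] [RCLike α]

lemma IsHermitian.conjTranspose_mul_eq {M : Matrix m m α} (hM : M.IsHermitian)
    {X Y : Matrix m k α} (h : M * X = Y) : Xᴴ * M = Yᴴ := by
  rw [← h, conjTranspose_mul, hM.eq]

variable [Fintype k] [DecidableEq k]

def mseMatrix (N : Matrix m m α) (C Γ : Matrix m k α) : Matrix k k α :=
  (1 - Γᴴ * C) * (1 - Γᴴ * C)ᴴ + Γᴴ * N * Γ

lemma mseMatrix_eq (N : Matrix m m α) (C Γ : Matrix m k α) :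
    mseMatrix N C Γ = 1 - Γᴴ * C - Cᴴ * Γ + Γᴴ * (N + C * Cᴴ) * Γ := by
  simp only [mseMatrix, conjTranspose_sub, conjTranspose_one, conjTranspose_mul,
    conjTranspose_conjTranspose, Matrix.sub_mul, Matrix.mul_sub, Matrix.add_mul, Matrix.mul_add,
    Matrix.one_mul, Matrix.mul_one, Matrix.mul_assoc]
  abel

variable {N : Matrix m m α} {C Γ₀ : Matrix m k α}

lemma mseMatrix_eq_one_sub (hN : N.IsHermitian) (hΓ₀ : (N + C * Cᴴ) * Γ₀ = C) :
    mseMatrix N C Γ₀ = 1 - Cᴴ * Γ₀ := by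
  have hΓ₀' := (hN.add (isHermitian_mul_conjTranspose_self C)).conjTranspose_mul_eq hΓ₀
  have h : Γ₀ᴴ * C = Cᴴ * Γ₀ := by
    conv_lhs => rw [← hΓ₀, ← Matrix.mul_assoc, hΓ₀']
  rw [mseMatrix_eq, h, hΓ₀']
  abel

lemma mseMatrix_eq_add (hN : N.IsHermitian) (hΓ₀ : (N + C * Cᴴ) * Γ₀ = C) (Γ : Matrix m k α) :
    mseMatrix N C Γ = mseMatrix N C Γ₀ + (Γ - Γ₀)ᴴ * (N + C * Cᴴ) * (Γ - Γ₀) := by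
  rw [mseMatrix_eq, mseMatrix_eq_one_sub hN hΓ₀]
  simp only [conjTranspose_sub, Matrix.sub_mul, Matrix.mul_sub]
  rw [(hN.add (isHermitian_mul_conjTranspose_self C)).conjTranspose_mul_eq hΓ₀,
    Matrix.mul_assoc Γᴴ _ Γ₀, hΓ₀]
  abel

lemma mseMatrix_inv_mul_mul_one_add [DecidableEq m] {N : Matrix m m α} (hN : N.PosDef)
    (C : Matrix m k α) :
    mseMatrix N C ((N + C * Cᴴ)⁻¹ * C) * (1 + Cᴴ * N⁻¹ * C) = 1 := by
  have hM : (N + C * Cᴴ).PosDef := hN.add_posSemidef (posSemidef_self_mul_conjTranspose C)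
  rw [mseMatrix_eq_one_sub hN.isHermitian (mul_nonsing_inv_cancel_left _ _ hM.isUnit_det),
    ← Matrix.mul_assoc]
  exact one_sub_mul_inv_mul_mul_one_add_mul_inv_mul C Cᴴ hN.isUnit_det hM.isUnit_det

end MSE

end Matrix

/-- Principle behind the WMMSE framework (Lemma 1). -/
theorem wmmse_principle (n p l : ℕ)
    (N : Matrix (Fin n) (Fin n) ℂ) (A : Matrix (Fin n) (Fin p) ℂ)
    (B : Matrix (Fin p) (Fin l) ℂ) (hN : N.PosDef)
    (E : Matrix (Fin n) (Fin l) ℂ → Matrix (Fin l) (Fin l) ℂ)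
    (hE : ∀ Γ, E Γ = ((1 : Matrix (Fin l) (Fin l) ℂ) - Γᴴ * A * B) *
        ((1 : Matrix (Fin l) (Fin l) ℂ) - Γᴴ * A * B)ᴴ + Γᴴ * N * Γ)
    (Γhat : Matrix (Fin n) (Fin l) ℂ)
    (hΓhat : Γhat = (N + A * B * Bᴴ * Aᴴ)⁻¹ * A * B) :
    (∀ (Γ : Matrix (Fin n) (Fin l) ℂ) (Ω : Matrix (Fin l) (Fin l) ℂ), Ω.PosDef →
      Real.log (((1 : Matrix (Fin n) (Fin n) ℂ) + A * B * Bᴴ * Aᴴ * N⁻¹).det.re) ≥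
        Real.log (Ω.det.re) - ((Ω * E Γ).trace).re + (l : ℝ)) ∧
    Real.log (((1 : Matrix (Fin n) (Fin n) ℂ) + A * B * Bᴴ * Aᴴ * N⁻¹).det.re) =
      Real.log (((E Γhat)⁻¹).det.re) - (((E Γhat)⁻¹ * E Γhat).trace).re + (l : ℝ) := by
  set C := A * B
  have hCC : A * B * Bᴴ * Aᴴ = C * Cᴴ := by simp only [C, conjTranspose_mul, Matrix.mul_assoc]
  obtain rfl : E = mseMatrix N C := funext fun Γ => by rw [hE, mseMatrix, Matrix.mul_assoc Γᴴ]
  rw [hCC, Matrix.mul_assoc] at hΓhat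
  have hM : (N + C * Cᴴ).PosDef := hN.add_posSemidef (posSemidef_self_mul_conjTranspose C)
  have hMΓhat : (N + C * Cᴴ) * Γhat = C := by
    rw [hΓhat, mul_nonsing_inv_cancel_left _ _ hM.isUnit_det]
  have hSG : mseMatrix N C Γhat * (1 + Cᴴ * N⁻¹ * C) = 1 :=
    hΓhat ▸ mseMatrix_inv_mul_mul_one_add hN C
  have hS : (mseMatrix N C Γhat).PosDef := by
    rw [← inv_eq_left_inv hSG]
    exact (PosDef.one.add_posSemidef (hN.inv.posSemidef.conjTranspose_mul_mul_same C)).inv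
  have hlhs : Real.log (1 + C * Cᴴ * N⁻¹).det.re = -Real.log (mseMatrix N C Γhat).det.re := by
    rw [Matrix.mul_assoc C, det_one_add_mul_comm]
    exact hS.log_re_det_eq_neg_of_mul_eq_one hSG
  have hSinv : Real.log (mseMatrix N C Γhat)⁻¹.det.re = -Real.log (mseMatrix N C Γhat).det.re :=
    hS.log_re_det_eq_neg_of_mul_eq_one (mul_nonsing_inv _ hS.isUnit_det)
  rw [hCC, hlhs]
  refine ⟨fun Γ Ω hΩ => ?_, ?_⟩
  · have hgap := hΩ.posSemidef.re_trace_mul_nonneg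
      (hM.posSemidef.conjTranspose_mul_mul_same (Γ - Γhat))
    have hgibbs := hΩ.log_re_det_sub_re_trace_mul_add_card_le hS
    rw [mseMatrix_eq_add hN.isHermitian hMΓhat Γ, Matrix.mul_add, trace_add, Complex.add_re]
    simp only [RCLike.re_to_complex, Fintype.card_fin] at hgap hgibbs
    linarith
  · rw [nonsing_inv_mul _ hS.isUnit_det, trace_one, hSinv]
    simp
end

section
/- For a Hermitian positive definite matrix S ∈ ℂ^{l×l}, the maximum of log det(Ω) − Tr(Ω S) over Hermitian positive definite Ω ∈ ℂ^{l×l} equals −log det(S) − l, attained uniquely at Ω = S⁻¹. -/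
open Matrix
open scoped ComplexOrder

/-!
Write `S = Rᴴ R` with `R` invertible (e.g. `R = √S`). The substitution `B = R Ω Rᴴ` is a bijection
of the positive definite cone and turns the objective into `log det B - Tr B - log det S`.
In terms of the eigenvalues `μᵢ > 0` of `B`, `log det B - Tr B = ∑ (log μᵢ - μᵢ) ≤ -l` since
`log x ≤ x - 1`, with equality iff every `μᵢ = 1`, i.e. `B = 1`, i.e. `Ω = S⁻¹`.
-/

namespace Matrix

variable {n 𝕜 : Type*} [Fintype n] [DecidableEq n] [RCLike 𝕜]

open scoped MatrixOrder in
lemma PosDef.exists_isUnit_conjTranspose_mul_self_eq {S : Matrix n n 𝕜} (hS : S.PosDef) :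
    ∃ R : Matrix n n 𝕜, IsUnit R ∧ Rᴴ * R = S := by
  have hR := hS.isStrictlyPositive.sqrt
  refine ⟨CFC.sqrt S, hR.isUnit, ?_⟩
  rw [hR.nonneg.posSemidef.isHermitian.eq, CFC.sqrt_mul_sqrt_self S hS.posSemidef.nonneg]

lemma PosDef.log_re_det_sub_re_trace_eq_sum {B : Matrix n n 𝕜} (hB : B.PosDef) :
    Real.log (RCLike.re B.det) - RCLike.re B.trace =
      ∑ i, (Real.log (hB.1.eigenvalues i) - hB.1.eigenvalues i) := by
  rw [hB.1.det_eq_prod_eigenvalues, hB.1.trace_eq_sum_eigenvalues, ← RCLike.ofReal_prod,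
    ← RCLike.ofReal_sum, RCLike.ofReal_re, RCLike.ofReal_re,
    Real.log_prod fun i _ => (hB.eigenvalues_pos i).ne', Finset.sum_sub_distrib]

lemma PosDef.log_re_det_sub_re_trace_le {B : Matrix n n 𝕜} (hB : B.PosDef) :
    Real.log (RCLike.re B.det) - RCLike.re B.trace ≤ -Fintype.card n := by
  rw [hB.log_re_det_sub_re_trace_eq_sum]
  calc _ ≤ ∑ _i : n, (-1 : ℝ) := Finset.sum_le_sum fun i _ => by
          linarith [Real.log_le_sub_one_of_pos (hB.eigenvalues_pos i)]
    _ = -Fintype.card n := by simp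

lemma PosDef.eq_one_of_log_re_det_sub_re_trace_eq {B : Matrix n n 𝕜} (hB : B.PosDef)
    (h : Real.log (RCLike.re B.det) - RCLike.re B.trace = -Fintype.card n) : B = 1 := by
  have hle : ∀ i ∈ Finset.univ, Real.log (hB.1.eigenvalues i) - hB.1.eigenvalues i ≤ -1 :=
    fun i _ => by linarith [Real.log_le_sub_one_of_pos (hB.eigenvalues_pos i)]
  have heq := (Finset.sum_eq_sum_iff_of_le hle).mp (by
    rw [← hB.log_re_det_sub_re_trace_eq_sum, h]; simp)
  have hone : ∀ i, hB.1.eigenvalues i = 1 := fun i => by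
    by_contra hi
    linarith [Real.log_lt_sub_one_of_pos (hB.eigenvalues_pos i) hi, heq i (Finset.mem_univ i)]
  refine CFC.eq_one_of_spectrum_subset_one (R := ℝ) B ?_ hB.1.isSelfAdjoint
  rw [hB.1.spectrum_real_eq_range_eigenvalues]
  rintro _ ⟨i, rfl⟩
  exact hone i

lemma log_re_det_sub_re_trace_conj {R S Ω : Matrix n n 𝕜} (hRS : Rᴴ * R = S) (hS : S.PosDef)
    (hΩ : Ω.PosDef) :
    Real.log (RCLike.re (R * Ω * Rᴴ).det) - RCLike.re (R * Ω * Rᴴ).trace =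
      Real.log (RCLike.re Ω.det) - RCLike.re (Ω * S).trace + Real.log (RCLike.re S.det) := by
  have hdet : (R * Ω * Rᴴ).det = Ω.det * S.det := by
    rw [← hRS, det_mul, det_mul, det_mul]; ring
  have htrace : (R * Ω * Rᴴ).trace = (Ω * S).trace := by
    rw [trace_mul_cycle, hRS, trace_mul_comm]
  obtain ⟨hΩre, hΩim⟩ := RCLike.pos_iff.mp hΩ.det_pos
  rw [hdet, htrace, RCLike.mul_re, hΩim, zero_mul, sub_zero,
    Real.log_mul hΩre.ne' (RCLike.pos_iff.mp hS.det_pos).1.ne']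
  ring

end Matrix

/-- The weight-matrix update: over Hermitian positive definite `Ω`, the function
`Ω ↦ log det Ω − Tr(Ω S)` is maximized uniquely at `Ω = S⁻¹` with value `−log det S − l`. -/
theorem weight_update_optimal (l : ℕ) (S : Matrix (Fin l) (Fin l) ℂ) (hS : S.PosDef) :
    (∀ Ω : Matrix (Fin l) (Fin l) ℂ, Ω.PosDef →
      Real.log (Ω.det.re) - ((Ω * S).trace).re ≤ -Real.log (S.det.re) - (l : ℝ)) ∧
    (S⁻¹).PosDef ∧
    (Real.log ((S⁻¹).det.re) - ((S⁻¹ * S).trace).re = -Real.log (S.det.re) - (l : ℝ)) ∧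
    (∀ Ω : Matrix (Fin l) (Fin l) ℂ, Ω.PosDef →
      Real.log (Ω.det.re) - ((Ω * S).trace).re = -Real.log (S.det.re) - (l : ℝ) →
      Ω = S⁻¹) := by
  obtain ⟨R, hR, hRS⟩ := hS.exists_isUnit_conjTranspose_mul_self_eq
  have hconj : ∀ Ω : Matrix (Fin l) (Fin l) ℂ, Ω.PosDef → (R * Ω * Rᴴ).PosDef :=
    fun Ω hΩ => hΩ.mul_mul_conjTranspose_same (vecMul_injective_of_isUnit hR)
  have hobjective : ∀ Ω : Matrix (Fin l) (Fin l) ℂ, Ω.PosDef →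
      Real.log Ω.det.re - (Ω * S).trace.re =
        Real.log (R * Ω * Rᴴ).det.re - (R * Ω * Rᴴ).trace.re - Real.log S.det.re := fun Ω hΩ => by
    have h := log_re_det_sub_re_trace_conj hRS hS hΩ
    simp only [RCLike.re_to_complex] at h
    linarith
  have hinv : R * S⁻¹ * Rᴴ = 1 := by
    rw [← hRS, Matrix.mul_inv_rev, ← mul_assoc, mul_nonsing_inv R ((isUnit_iff_isUnit_det R).mp hR),
      one_mul, nonsing_inv_mul _ ((isUnit_iff_isUnit_det Rᴴ).mp hR.star)]
  refine ⟨fun Ω hΩ => ?_, hS.inv, ?_, fun Ω hΩ hopt => ?_⟩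
  · have hle := (hconj Ω hΩ).log_re_det_sub_re_trace_le
    simp only [RCLike.re_to_complex, Fintype.card_fin] at hle
    linarith [hobjective Ω hΩ]
  · rw [hobjective _ hS.inv, hinv]
    simp [sub_eq_add_neg, add_comm]
  · have hone := (hconj Ω hΩ).eq_one_of_log_re_det_sub_re_trace_eq (by
      simp only [RCLike.re_to_complex, Fintype.card_fin]
      linarith [hobjective Ω hΩ])
    rw [← hinv] at hone
    exact hR.mul_left_cancel (hR.star.mul_right_cancel hone)
end

section
/- Let a > 0 and b ∈ ℂ^n, and let p* = −b · min(1/a, √P/‖b‖) for P > 0 (with p* = 0 when b = 0). Then p* satisfies the KKT conditions of minimizing a‖p‖² + 2Re(bᴴp) subject to ‖p‖² ≤ P: there exists μ ≥ 0 with (a + μ)p* = −b and μ(‖p*‖² − P) = 0 and ‖p*‖² ≤ P. -/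
/-!
The multiplier is `μ = max 0 (‖b‖ / √P - a)`, so that `a + μ = max a (‖b‖ / √P)` is exactly the
reciprocal of the step `min (1 / a) (√P / ‖b‖)`; this gives stationarity. When `μ > 0` the step is
`√P / ‖b‖`, so the constraint is active, and in every case the step is at most `√P / ‖b‖`, which
gives feasibility.
-/

section
variable {α : Type*} [Field α] [LinearOrder α] [IsStrictOrderedRing α] {a r s : α}

theorem max_div_mul_min_one_div_eq_one (ha : 0 < a) (hr : 0 < r) (hs : 0 < s) :
    max a (r / s) * min (1 / a) (s / r) = 1 := by
  rcases le_total a (r / s) with h | h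
  · have h' : s / r ≤ 1 / a := by simpa using one_div_le_one_div_of_le ha h
    rw [max_eq_right h, min_eq_right h']
    field_simp
  · have h' : 1 / a ≤ s / r := by simpa using one_div_le_one_div_of_le (by positivity) h
    rw [max_eq_left h, min_eq_left h', mul_one_div_cancel ha.ne']

theorem min_one_div_div_mul_le (hr : 0 ≤ r) (hs : 0 ≤ s) : min (1 / a) (s / r) * r ≤ s := by
  rcases hr.eq_or_lt with rfl | hr
  · simpa using hs
  · calc min (1 / a) (s / r) * r ≤ s / r * r := by gcongr; exact min_le_right _ _
      _ = s := div_mul_cancel₀ s hr.ne'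

theorem min_one_div_div_mul_eq_of_lt (ha : 0 < a) (hs : 0 < s) (h : a < r / s) :
    min (1 / a) (s / r) * r = s := by
  have hr : 0 < r := by simpa [hs] using ha.trans h
  have h' : s / r ≤ 1 / a := by simpa using one_div_le_one_div_of_le ha h.le
  rw [min_eq_right h', div_mul_cancel₀ s hr.ne']

end

/-- The closed-form per-antenna update satisfies the KKT conditions of the
ball-constrained quadratic program. -/
theorem papc_update_kkt (n : ℕ) (a P : ℝ) (ha : 0 < a) (hP : 0 < P)
    (b : EuclideanSpace ℂ (Fin n))
    (pstar : EuclideanSpace ℂ (Fin n))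
    (hpstar : pstar = (-(min (1 / a) (Real.sqrt P / ‖b‖))) • b) :
    ∃ μ : ℝ, 0 ≤ μ ∧
      ((a + μ : ℝ) : ℂ) • pstar = -b ∧
      μ * (‖pstar‖ ^ 2 - P) = 0 ∧
      ‖pstar‖ ^ 2 ≤ P := by
  set t := min (1 / a) (√P / ‖b‖)
  have hsP : 0 < √P := Real.sqrt_pos.mpr hP
  have hnorm : ‖pstar‖ = t * ‖b‖ := by
    rw [hpstar, norm_smul, norm_neg, Real.norm_of_nonneg (by positivity)]
  have hc : a + max 0 (‖b‖ / √P - a) = max a (‖b‖ / √P) := by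
    rw [← max_add_add_left, add_zero, add_sub_cancel]
  refine ⟨max 0 (‖b‖ / √P - a), le_max_left _ _, ?_, ?_, ?_⟩
  · rcases eq_or_ne b 0 with rfl | hb
    · simp [hpstar]
    · rw [hc, Complex.coe_smul, hpstar, smul_smul, mul_neg,
        max_div_mul_min_one_div_eq_one ha (norm_pos_iff.mpr hb) hsP, neg_smul, one_smul]
  · by_cases h : a < ‖b‖ / √P
    · rw [hnorm, min_one_div_div_mul_eq_of_lt ha hsP h, Real.sq_sqrt hP.le, sub_self, mul_zero]
    · rw [max_eq_left (by linarith), zero_mul]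
  · rw [← Real.le_sqrt (norm_nonneg _) hP.le, hnorm]
    exact min_one_div_div_mul_le (norm_nonneg _) hsP.le
end
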